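/- arXiv:math/0409198 — 2 statements merged into one kernel-verified Lean document; each statement's English description precedes it below -/
import Mathlib

section
/- Let v₁,...,vₘ : (ℝ,0) → ℝⁿ be real analytic germs of vector-valued functions with m ≤ n. Then there exist k ≤ n real analytic germs w₁,...,w_k : (ℝ,0) → ℝⁿ such that w₁(ε),...,w_k(ε) are linearly independent for all ε in a neighborhood of 0, and for all ε ≠ 0 in that neighborhood, the span of {w₁(ε),...,w_k(ε)} equals the span of {v₁(ε),...,vₘ(ε)}. -/
open Filter Submodule Set

lemma my_analyticAt_det {k : ℕ} {A : ℝ → Matrix (Fin k) (Fin k) ℝ}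
    (h : ∀ i j, AnalyticAt ℝ (fun ε => A ε i j) 0) :
    AnalyticAt ℝ (fun ε => (A ε).det) 0 := by
  simp_rw [Matrix.det_apply']
  exact Finset.analyticAt_fun_sum _ fun σ _ =>
    analyticAt_const.mul (Finset.analyticAt_fun_prod _ fun i _ => h _ _)

lemma my_sup_span_congr {E : Type*} [AddCommGroup E] [Module ℝ E] {W : Submodule ℝ E} {x y : E}
    (h : x - y ∈ W) : (ℝ ∙ x) ⊔ W = (ℝ ∙ y) ⊔ W := by
  have key : ∀ a b : E, a - b ∈ W → (ℝ ∙ a) ⊔ W ≤ (ℝ ∙ b) ⊔ W := by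
    intro a b hab
    refine sup_le ?_ le_sup_right
    rw [Submodule.span_singleton_le_iff_mem]
    have : b + (a - b) = a := by abel
    exact this ▸ Submodule.add_mem _
      (Submodule.mem_sup_left (Submodule.mem_span_singleton_self b))
      (Submodule.mem_sup_right hab)
  exact le_antisymm (key x y h) (key y x (by simpa using W.neg_mem h))

lemma my_li_of_det {k : ℕ} {f : Fin k → (Fin k → ℝ)}
    (h : (Matrix.of fun i j => f j i).det ≠ 0) : LinearIndependent ℝ f := by
  rw [Fintype.linearIndependent_iff]
  intro g hg
  set M : Matrix (Fin k) (Fin k) ℝ := Matrix.of fun i j => f j i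
  have hMg : M.mulVec g = 0 := by
    funext i
    have := congrFun hg i
    simpa [Matrix.mulVec, dotProduct, M, mul_comm] using this
  have hunit : IsUnit M.det := isUnit_iff_ne_zero.mpr h
  have : g = 0 := by
    have := congrArg (fun z => M⁻¹.mulVec z) hMg
    simpa [Matrix.mulVec_mulVec, Matrix.nonsing_inv_mul M hunit] using this
  intro i; rw [this]; rfl

lemma my_span_pi_zero {n k : ℕ} (π : (Fin n → ℝ) →ₗ[ℝ] (Fin k → ℝ))
    {w : Fin k → (Fin n → ℝ)} (hli : LinearIndependent ℝ (fun i => π (w i)))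
    {x : Fin n → ℝ} (hx : x ∈ span ℝ (Set.range w)) (hπ : π x = 0) : x = 0 := by
  obtain ⟨c, rfl⟩ := (mem_span_range_iff_exists_fun ℝ).1 hx
  have h2 : ∑ i, c i • π (w i) = 0 := by
    rw [← hπ]; simp [map_sum, map_smul]
  have := Fintype.linearIndependent_iff.1 hli c h2
  simp only [this, zero_smul, Finset.sum_const_zero]

theorem my_main (n : ℕ) : ∀ (m : ℕ) (v : Fin m → ℝ → (Fin n → ℝ)),
    (∀ i, AnalyticAt ℝ (v i) 0) →
    ∃ (k : ℕ), k ≤ n ∧ ∃ w : Fin k → ℝ → (Fin n → ℝ),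
      (∀ i, AnalyticAt ℝ (w i) 0) ∧
      (∀ᶠ ε in nhds (0 : ℝ), LinearIndependent ℝ (fun i : Fin k => w i ε)) ∧
      (∀ᶠ ε in nhdsWithin (0 : ℝ) {0}ᶜ,
        Submodule.span ℝ (Set.range fun i : Fin k => w i ε) =
          Submodule.span ℝ (Set.range fun i : Fin m => v i ε)) := by
  intro m
  induction m with
  | zero =>
    intro v hv
    refine ⟨0, Nat.zero_le n, fun i => i.elim0, fun i => i.elim0, ?_, ?_⟩
    · exact Eventually.of_forall fun ε => linearIndependent_empty_type
    · exact Eventually.of_forall fun ε => by simp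
  | succ m ih =>
    intro v hv
    obtain ⟨k, hk, w, hw_an, hw_li, hw_span⟩ := ih (fun i => v i.succ) (fun i => hv i.succ)
    -- set up the left inverse π
    have hw0 : LinearIndependent ℝ (fun i => w i 0) := hw_li.self_of_nhds
    set T : (Fin k → ℝ) →ₗ[ℝ] (Fin n → ℝ) :=
      Fintype.linearCombination ℝ (fun i => w i 0) with hT
    have hTker : LinearMap.ker T = ⊥ := by
      rw [LinearMap.ker_eq_bot']
      intro c hc
      have := Fintype.linearIndependent_iff.1 hw0 c
        (by rw [← hc]; simp [hT, Fintype.linearCombination_apply])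
      funext i; exact this i
    obtain ⟨π, hπT⟩ := T.exists_leftInverse_of_injective hTker
    have hπw0 : ∀ j, π (w j 0) = Pi.single j 1 := by
      intro j
      have h1 : T (Pi.single j 1) = w j 0 := by
        simp [hT, Fintype.linearCombination_apply_single]
      calc π (w j 0) = (π ∘ₗ T) (Pi.single j 1) := by rw [LinearMap.comp_apply, h1]
        _ = Pi.single j 1 := by rw [hπT]; rfl
    -- π composed with analytic functions is analytic componentwise
    have hπ_an : ∀ (f : ℝ → (Fin n → ℝ)), AnalyticAt ℝ f 0 → ∀ i : Fin k,
        AnalyticAt ℝ (fun ε => π (f ε) i) 0 := by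
      intro f hf i
      exact (((ContinuousLinearMap.proj i : (Fin k → ℝ) →L[ℝ] ℝ).comp
        (π.toContinuousLinearMap)).analyticAt _).comp hf
    -- the matrix M
    set M : ℝ → Matrix (Fin k) (Fin k) ℝ := fun ε => Matrix.of fun i j => π (w j ε) i with hM
    have hMa : ∀ i j, AnalyticAt ℝ (fun ε => M ε i j) 0 := fun i j => hπ_an _ (hw_an j) i
    have hdet_an : AnalyticAt ℝ (fun ε => (M ε).det) 0 := my_analyticAt_det hMa
    have hM0 : M 0 = 1 := by
      ext i j
      simp [hM, hπw0, Pi.single_apply, Matrix.one_apply, eq_comm]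
    have hdet0 : (M 0).det = 1 := by rw [hM0, Matrix.det_one]
    have hdet_ne : ∀ᶠ ε in nhds (0 : ℝ), (M ε).det ≠ 0 :=
      hdet_an.continuousAt.eventually_ne (by rw [hdet0]; norm_num)
    set u : ℝ → (Fin n → ℝ) := v 0 with hu
    have hu_an : AnalyticAt ℝ u 0 := hv 0
    set c : ℝ → Fin k → ℝ := fun ε => ((M ε).det)⁻¹ • Matrix.cramer (M ε) (π (u ε)) with hc
    have hc_an : ∀ j, AnalyticAt ℝ (fun ε => c ε j) 0 := by
      intro j
      have h1 : AnalyticAt ℝ (fun ε => ((M ε).det)⁻¹) 0 :=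
        hdet_an.inv (by rw [hdet0]; norm_num)
      have h2 : AnalyticAt ℝ (fun ε => Matrix.cramer (M ε) (π (u ε)) j) 0 := by
        simp_rw [Matrix.cramer_apply]
        apply my_analyticAt_det
        intro i l
        by_cases hl : l = j
        · simp only [Matrix.updateCol_apply, hl, if_true]
          exact hπ_an _ hu_an i
        · simp only [Matrix.updateCol_apply, hl, if_false]
          exact hMa i l
      simpa [hc, smul_eq_mul] using h1.fun_mul h2
    set r : ℝ → (Fin n → ℝ) := fun ε => u ε - ∑ j, c ε j • w j ε with hr
    have hr_an : AnalyticAt ℝ r 0 :=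
      hu_an.sub (Finset.analyticAt_fun_sum _ fun j _ => (hc_an j).fun_smul (hw_an j))
    have hπr : ∀ᶠ ε in nhds (0 : ℝ), π (r ε) = 0 := by
      filter_upwards [hdet_ne] with ε hdet
      have hMc : (M ε).mulVec (c ε) = π (u ε) := by
        rw [hc]
        simp only [Matrix.mulVec_smul, Matrix.mulVec_cramer]
        rw [smul_smul, inv_mul_cancel₀ hdet, one_smul]
      have hsum : (∑ j, c ε j • π (w j ε)) = (M ε).mulVec (c ε) := by
        funext i
        simp [Matrix.mulVec, dotProduct, hM, mul_comm, Finset.sum_apply]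
      rw [hr]
      simp only [map_sub, map_sum, map_smul]
      rw [hsum, hMc, sub_self]
    -- linear independence of π ∘ w at good ε
    have hli_pi : ∀ ε : ℝ, (M ε).det ≠ 0 → LinearIndependent ℝ (fun i => π (w i ε)) := by
      intro ε hdet
      exact my_li_of_det (f := fun i => π (w i ε)) hdet
    by_cases hr0 : ∀ᶠ ε in nhds (0 : ℝ), r ε = 0
    · -- u is already in the span of w near 0
      refine ⟨k, hk, w, hw_an, hw_li, ?_⟩
      filter_upwards [hw_span, hr0.filter_mono nhdsWithin_le_nhds] with ε hspan hrε
      have humem : u ε ∈ span ℝ (Set.range fun i => w i ε) := by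
        have h1 : u ε = ∑ j, c ε j • w j ε := by
          have h2 := hrε
          rw [hr, sub_eq_zero] at h2
          exact h2
        rw [h1]
        exact Submodule.sum_mem _ fun j _ =>
          Submodule.smul_mem _ _ (Submodule.subset_span (mem_range_self j))
      have hins : (Set.range fun i : Fin (m+1) => v i ε) =
          insert (u ε) (Set.range fun i : Fin m => v i.succ ε) :=
        Fin.range_fin_succ _
      rw [hins, Submodule.span_insert, ← hspan]
      exact (sup_eq_right.2 ((Submodule.span_singleton_le_iff_mem _ _).2 humem)).symm
    · obtain ⟨d, s, hs_an, hs0, hrs⟩ :=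
        (hr_an.exists_eventuallyEq_pow_smul_nonzero_iff).2 hr0
      simp only [sub_zero] at hrs
      have hπs_pun : ∀ᶠ ε in nhdsWithin (0:ℝ) {0}ᶜ, π (s ε) = 0 := by
        rw [eventually_nhdsWithin_iff]
        filter_upwards [hπr, hrs] with ε h1 h2 hε
        have hεne : (ε:ℝ) ≠ 0 := by simpa using hε
        have h3 : (ε ^ d) • π (s ε) = 0 := by rw [← map_smul, ← h2, h1]
        exact (smul_eq_zero.1 h3).resolve_left (pow_ne_zero _ hεne)
      have hπs0 : π (s 0) = 0 := by
        have hcont : ContinuousAt (fun ε => π (s ε)) 0 :=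
          π.toContinuousLinearMap.continuous.continuousAt.comp hs_an.continuousAt
        have ht : Tendsto (fun ε => π (s ε)) (nhdsWithin (0:ℝ) {0}ᶜ) (nhds (π (s 0))) :=
          hcont.tendsto.mono_left nhdsWithin_le_nhds
        have heq : (fun ε => π (s ε)) =ᶠ[nhdsWithin (0:ℝ) {0}ᶜ] (fun _ => 0) := hπs_pun
        have ht0 : Tendsto (fun ε => π (s ε)) (nhdsWithin (0:ℝ) {0}ᶜ) (nhds 0) :=
          tendsto_const_nhds.congr' heq.symm
        exact tendsto_nhds_unique ht ht0
      have hπs : ∀ᶠ ε in nhds (0:ℝ), π (s ε) = 0 := by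
        rw [← nhdsNE_sup_pure, eventually_sup]
        exact ⟨hπs_pun, by simpa using hπs0⟩
      have hs_ne : ∀ᶠ ε in nhds (0:ℝ), s ε ≠ 0 := hs_an.continuousAt.eventually_ne hs0
      set w' : Fin (k+1) → ℝ → Fin n → ℝ := Fin.cons s w with hw'
      have hcons : ∀ ε : ℝ, (fun i : Fin (k+1) => w' i ε) =
          Fin.cons (s ε) (fun i => w i ε) := by
        intro ε; funext i
        refine Fin.cases ?_ ?_ i
        · simp [hw']
        · intro j; simp [hw']
      have hli' : ∀ᶠ ε in nhds (0:ℝ),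
          LinearIndependent ℝ (fun i : Fin (k+1) => w' i ε) := by
        filter_upwards [hdet_ne, hπs, hs_ne] with ε h1 h2 h3
        rw [hcons ε, linearIndependent_fin_cons]
        have hliw : LinearIndependent ℝ (fun i => π (w i ε)) := hli_pi ε h1
        refine ⟨LinearIndependent.of_comp π hliw, fun hmem => ?_⟩
        exact h3 (my_span_pi_zero π hliw hmem h2)
      have hkn : k + 1 ≤ n := by
        have hli0 := hli'.self_of_nhds
        have hcard := hli0.fintype_card_le_finrank
        simpa using hcard
      refine ⟨k + 1, hkn, w', ?_, hli', ?_⟩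
      · intro i
        refine Fin.cases ?_ ?_ i
        · simpa [hw'] using hs_an
        · intro j; simpa [hw'] using hw_an j
      · filter_upwards [hw_span, ((hdet_ne.and hπr).and hrs).filter_mono nhdsWithin_le_nhds,
          eventually_mem_nhdsWithin] with ε hspan h2 hε
        obtain ⟨⟨hdet, hπrε⟩, hrsε⟩ := h2
        have hεne : (ε:ℝ) ≠ 0 := by simpa using hε
        rw [hcons ε, Fin.range_cons, Submodule.span_insert]
        have hins : (Set.range fun i : Fin (m+1) => v i ε) =
            insert (u ε) (Set.range fun i : Fin m => v i.succ ε) :=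
          Fin.range_fin_succ _
        rw [hins, Submodule.span_insert, ← hspan]
        have hW : u ε - r ε ∈ span ℝ (Set.range fun i => w i ε) := by
          rw [hr]
          simp only [sub_sub_cancel]
          exact Submodule.sum_mem _ fun j _ =>
            Submodule.smul_mem _ _ (Submodule.subset_span (mem_range_self j))
        have hspan_s : span ℝ {s ε} = span ℝ {r ε} := by
          rw [hrsε]
          exact (Submodule.span_singleton_smul_eq
            (isUnit_iff_ne_zero.2 (pow_ne_zero d hεne)) _).symm
        rw [hspan_s]
        have hru : r ε - u ε ∈ span ℝ (Set.range fun i => w i ε) := by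
          have := Submodule.neg_mem _ hW
          simpa [neg_sub] using this
        exact my_sup_span_congr hru

/-- Given real analytic germs `v₁,…,vₘ : (ℝ,0) → ℝⁿ` with `m ≤ n`, there exist
`k ≤ n` real analytic germs `w₁,…,w_k` that are linearly independent for all `ε`
near `0` and span the same subspace as `v₁(ε),…,vₘ(ε)` for all `ε ≠ 0` near `0`. -/
theorem analytic_family_span_regularization (n m : ℕ) (hmn : m ≤ n)
    (v : Fin m → ℝ → (Fin n → ℝ)) (hv : ∀ i, AnalyticAt ℝ (v i) 0) :
    ∃ (k : ℕ), k ≤ n ∧ ∃ w : Fin k → ℝ → (Fin n → ℝ),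
      (∀ i, AnalyticAt ℝ (w i) 0) ∧
      (∀ᶠ ε in nhds (0 : ℝ), LinearIndependent ℝ (fun i : Fin k => w i ε)) ∧
      (∀ᶠ ε in nhdsWithin (0 : ℝ) {0}ᶜ,
        Submodule.span ℝ (Set.range fun i : Fin k => w i ε) =
          Submodule.span ℝ (Set.range fun i : Fin m => v i ε)) := by
  exact my_main n m v hv
end

section
/- Suppose pⱼ(t,ε), j = 0,...,n, are polynomial in t with coefficients analytic in ε near 0, and aⱼ(t,ε) are analytic with a₀(·,0) ≢ 0, such that for all ε ≠ 0 the ratios satisfy pⱼ/p₀ = aⱼ/a₀ as rational functions of t. Write pⱼ(t,ε) = ε^{νⱼ} qⱼ(t,ε) with qⱼ(·,0) ≢ 0. Then νⱼ ≥ ν₀ for all j = 1,...,n, and consequently the ratios ‖pⱼ(·,ε)‖/‖p₀(·,ε)‖ of ℓ¹-norms in ℂ[t] have finite limits as ε → 0. -/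
open Metric Filter Polynomial

/-- The ℓ¹-norm of a univariate polynomial. -/
noncomputable def l1norm (f : Polynomial ℂ) : ℝ := ∑ k ∈ f.support, ‖f.coeff k‖

lemma ball_infinite (c : ℂ) {δ : ℝ} (hδ : 0 < δ) : (ball c δ).Infinite := by
  have hinj : Function.Injective (fun k : ℕ => c + (δ / (k + 2) : ℝ)) := by
    intro i j hij
    simp only [add_right_inj] at hij
    have h2 : (δ / (i + 2) : ℝ) = δ / (j + 2) := by exact_mod_cast congrArg Complex.re hij
    have hi : (0:ℝ) < i + 2 := by positivity
    have hj : (0:ℝ) < j + 2 := by positivity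
    field_simp at h2
    have h3 : (i:ℝ) = j := by linarith
    exact_mod_cast h3
  apply Set.infinite_of_injective_forall_mem hinj
  intro k
  simp only [mem_ball, dist_eq_norm, add_sub_cancel_left]
  rw [Complex.norm_real, Real.norm_eq_abs, abs_of_pos (by positivity),
    div_lt_iff₀ (by positivity)]
  nlinarith

lemma l1norm_eq_sum_range {f : Polynomial ℂ} {d : ℕ} (h : f.natDegree ≤ d) :
    l1norm f = ∑ k ∈ Finset.range (d + 1), ‖f.coeff k‖ := by
  apply Finset.sum_subset
  · intro k hk
    exact Finset.mem_range.2 (Nat.lt_succ_of_le ((le_natDegree_of_mem_supp k hk).trans h))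
  · intro k _ hk
    simp [Polynomial.notMem_support_iff.1 hk]

/-- Suppose `pⱼ(t,ε) = ε^{νⱼ} qⱼ(t,ε)` are polynomial in `t` with coefficients analytic
in `ε` near `0` and `qⱼ(·,0) ≠ 0`, and `aⱼ(t,ε)` are analytic with `a₀(·,0) ≢ 0`, such
that `pⱼ/p₀ = aⱼ/a₀` for `ε ≠ 0`. Then `νⱼ ≥ ν₀` for all `j`, and the ratios of
ℓ¹-norms `‖pⱼ(·,ε)‖/‖p₀(·,ε)‖` have finite limits as `ε → 0`. -/
theorem ratios_of_norms_have_finite_limits (n d : ℕ) (r : ℝ) (hr : 0 < r)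
    (ν : Fin (n + 1) → ℕ) (q : Fin (n + 1) → ℂ → Polynomial ℂ)
    (hdeg : ∀ j ε, (q j ε).natDegree ≤ d)
    (hq : ∀ j k, AnalyticAt ℂ (fun ε => (q j ε).coeff k) 0)
    (hq0 : ∀ j, q j 0 ≠ 0)
    (a : Fin (n + 1) → ℂ → ℂ → ℂ)
    (ha : ∀ i, AnalyticOn ℂ (fun z : ℂ × ℂ => a i z.1 z.2) (ball (0 : ℂ) 1 ×ˢ ball (0 : ℂ) r))
    (ha0 : ∃ t ∈ ball (0 : ℂ) 1, a 0 t 0 ≠ 0)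
    (hratio : ∀ ε ∈ ball (0 : ℂ) r, ε ≠ 0 → ∀ j : Fin (n + 1), ∀ t ∈ ball (0 : ℂ) 1,
      (Polynomial.C (ε ^ ν j) * q j ε).eval t * a 0 t ε
        = a j t ε * (Polynomial.C (ε ^ ν 0) * q 0 ε).eval t) :
    (∀ j, ν 0 ≤ ν j) ∧
    ∀ j : Fin (n + 1), ∃ L : ℝ,
      Tendsto (fun ε : ℂ =>
          l1norm (Polynomial.C (ε ^ ν j) * q j ε) / l1norm (Polynomial.C (ε ^ ν 0) * q 0 ε))
        (nhdsWithin 0 {0}ᶜ) (nhds L) := by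
  -- N j ε : total coefficient mass of q j ε
  set N : Fin (n + 1) → ℂ → ℝ := fun j ε => ∑ k ∈ Finset.range (d + 1), ‖(q j ε).coeff k‖
    with hNdef
  have hNcont : ∀ j, ContinuousAt (fun ε => N j ε) 0 := by
    intro j
    apply tendsto_finset_sum
    intro k _
    exact ((hq j k).continuousAt).norm
  have hNpos : ∀ j, 0 < N j 0 := by
    intro j
    have hex : ∃ k, (q j 0).coeff k ≠ 0 := by
      by_contra hcon
      push_neg at hcon
      exact hq0 j (Polynomial.ext fun k => by simpa using hcon k)
    obtain ⟨k, hk⟩ := hex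
    have hkd : k ∈ Finset.range (d + 1) :=
      Finset.mem_range.2 (Nat.lt_succ_of_le ((le_natDegree_of_ne_zero hk).trans (hdeg j 0)))
    apply Finset.sum_pos' (fun i _ => norm_nonneg _)
    exact ⟨k, hkd, norm_pos_iff.2 hk⟩
  have hl1 : ∀ j (ε : ℂ), l1norm (Polynomial.C (ε ^ ν j) * q j ε) = ‖ε‖ ^ ν j * N j ε := by
    intro j ε
    rw [l1norm_eq_sum_range ((natDegree_C_mul_le _ _).trans (hdeg j ε)), hNdef,
      Finset.mul_sum]
    apply Finset.sum_congr rfl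
    intro k _
    rw [Polynomial.coeff_C_mul, norm_mul, norm_pow]
  -- continuity of a i in ε at (t, 0)
  have hAcont : ∀ i : Fin (n + 1), ∀ t ∈ ball (0 : ℂ) 1,
      ContinuousAt (fun ε => a i t ε) 0 := by
    intro i t ht
    have hopen : IsOpen (ball (0 : ℂ) 1 ×ˢ ball (0 : ℂ) r) := isOpen_ball.prod isOpen_ball
    have hmem : ((t, (0 : ℂ)) : ℂ × ℂ) ∈ ball (0 : ℂ) 1 ×ˢ ball (0 : ℂ) r :=
      ⟨ht, mem_ball_self hr⟩
    have h1 : ContinuousAt (fun z : ℂ × ℂ => a i z.1 z.2) (t, 0) :=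
      (ha i).continuousOn.continuousAt (hopen.mem_nhds hmem)
    exact h1.comp ((continuous_const.prodMk continuous_id).continuousAt)
  have hQcont : ∀ i : Fin (n + 1), ∀ t : ℂ, ContinuousAt (fun ε => (q i ε).eval t) 0 := by
    intro i t
    have hev : ∀ ε, (q i ε).eval t = ∑ k ∈ Finset.range (d + 1), (q i ε).coeff k * t ^ k :=
      fun ε => Polynomial.eval_eq_sum_range' (lt_of_le_of_lt (hdeg i ε) (Nat.lt_succ_self d)) t
    simp only [hev]
    apply tendsto_finset_sum
    intro k _
    exact ((hq i k).continuousAt).mul continuousAt_const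
  have hball : ball (0 : ℂ) r ∈ nhdsWithin (0 : ℂ) {0}ᶜ :=
    nhdsWithin_le_nhds (ball_mem_nhds _ hr)
  -- Part 1: ν 0 ≤ ν j
  have hge : ∀ j, ν 0 ≤ ν j := by
    intro j
    by_contra hlt
    push_neg at hlt
    set m := ν 0 - ν j with hm
    have hm1 : 0 < m := by omega
    have hsum : ν 0 = ν j + m := by omega
    have hvanish : ∀ t ∈ ball (0 : ℂ) 1, (q j 0).eval t * a 0 t 0 = 0 := by
      intro t ht
      have hF : Tendsto (fun ε => (q j ε).eval t * a 0 t ε) (nhdsWithin 0 {0}ᶜ)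
          (nhds ((q j 0).eval t * a 0 t 0)) :=
        (((hQcont j t).mul (hAcont 0 t ht)).tendsto).mono_left nhdsWithin_le_nhds
      have hG : Tendsto (fun ε : ℂ => ε ^ m * (a j t ε * (q 0 ε).eval t))
          (nhdsWithin 0 {0}ᶜ) (nhds 0) := by
        have hc : ContinuousAt (fun ε : ℂ => ε ^ m * (a j t ε * (q 0 ε).eval t)) 0 :=
          (continuousAt_id.pow m).mul ((hAcont j t ht).mul (hQcont 0 t))
        have := hc.tendsto.mono_left (nhdsWithin_le_nhds (s := ({0}ᶜ : Set ℂ)))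
        simpa [zero_pow hm1.ne'] using this
      have heq : (fun ε => (q j ε).eval t * a 0 t ε)
          =ᶠ[nhdsWithin (0 : ℂ) {0}ᶜ] (fun ε : ℂ => ε ^ m * (a j t ε * (q 0 ε).eval t)) := by
        filter_upwards [self_mem_nhdsWithin, hball] with ε hε1 hε2
        have hε0 : ε ≠ 0 := hε1
        have h3 := hratio ε hε2 hε0 j t ht
        simp only [Polynomial.eval_mul, Polynomial.eval_C] at h3
        rw [hsum, pow_add] at h3
        have hεν : (ε : ℂ) ^ ν j ≠ 0 := pow_ne_zero _ hε0
        apply mul_left_cancel₀ hεν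
        linear_combination h3
      exact tendsto_nhds_unique (hF.congr' heq) hG
    obtain ⟨t₀, ht₀, ha₀⟩ := ha0
    have hc : ContinuousAt (fun t => a 0 t 0) t₀ := by
      have hopen : IsOpen (ball (0 : ℂ) 1 ×ˢ ball (0 : ℂ) r) := isOpen_ball.prod isOpen_ball
      have hmem : ((t₀, (0 : ℂ)) : ℂ × ℂ) ∈ ball (0 : ℂ) 1 ×ˢ ball (0 : ℂ) r :=
        ⟨ht₀, mem_ball_self hr⟩
      have h2 : ContinuousAt (fun s : ℂ => ((s, (0 : ℂ)) : ℂ × ℂ)) t₀ :=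
        (continuous_id.prodMk continuous_const).continuousAt
      have h3 : ContinuousAt ((fun z : ℂ × ℂ => a 0 z.1 z.2) ∘ (fun s : ℂ => (s, 0))) t₀ :=
        ContinuousAt.comp (x := t₀) ((ha 0).continuousOn.continuousAt (hopen.mem_nhds hmem)) h2
      exact h3
    have hev : ∀ᶠ s in nhds t₀, a 0 s 0 ≠ 0 ∧ s ∈ ball (0 : ℂ) 1 :=
      (hc.eventually_ne ha₀).and (isOpen_ball.eventually_mem ht₀)
    obtain ⟨δ, hδ, hδball⟩ := Metric.eventually_nhds_iff_ball.1 hev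
    have hroots : { x : ℂ | (q j 0).IsRoot x }.Finite := finite_setOf_isRoot (hq0 j)
    obtain ⟨s, hs⟩ := ((ball_infinite t₀ hδ).diff hroots).nonempty
    obtain ⟨hs1, hs2⟩ := hs
    obtain ⟨hne, hmem2⟩ := hδball s hs1
    exact hs2 (by
      have := hvanish s hmem2
      rcases mul_eq_zero.1 this with h | h
      · exact h
      · exact absurd h hne)
  -- Part 2: limits
  refine ⟨hge, fun j => ?_⟩
  refine ⟨(0 : ℝ) ^ (ν j - ν 0) * (N j 0 / N 0 0), ?_⟩
  have key : Tendsto (fun ε : ℂ => ‖ε‖ ^ (ν j - ν 0) * (N j ε / N 0 ε)) (nhds 0)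
      (nhds ((0 : ℝ) ^ (ν j - ν 0) * (N j 0 / N 0 0))) := by
    have h1 : Tendsto (fun ε : ℂ => ‖ε‖ ^ (ν j - ν 0)) (nhds 0)
        (nhds ((0 : ℝ) ^ (ν j - ν 0))) := by
      simpa using ((continuous_norm.tendsto (0 : ℂ)).pow (ν j - ν 0))
    exact h1.mul ((hNcont j).div (hNcont 0) (hNpos 0).ne')
  apply (key.mono_left nhdsWithin_le_nhds).congr'
  filter_upwards [self_mem_nhdsWithin] with ε hε
  have hε0 : ε ≠ 0 := hε
  rw [hl1 j ε, hl1 0 ε, mul_div_mul_comm,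
    pow_sub₀ ‖ε‖ (norm_ne_zero_iff.2 hε0) (hge j)]
  ring
end
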